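/- Suppose the Continuum Hypothesis fails (2^{ℵ₀} > ℵ₁). Then every full, splitting, normal tree T of height ω₁ has at least 2^{ℵ₀}-many cofinal branches. In particular, under ¬CH it has more than ω₁-many cofinal branches. -/

import Mathlib

/-!
Splitting embeds the Cantor tree `2^{<ω}` into `T`: every `x : ℕ → Bool` picks a chain, and
maximal chains extending the chains of distinct `x` are distinct, so `T` has `2^ℵ₀` maximal
chains. A maximal chain that is not a cofinal branch is a vanishing branch at some countable
limit level, and by fullness that level determines it; so at most `ℵ₁` maximal chains are not
cofinal branches, and under `¬CH` the remaining `2^ℵ₀` ones are.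
-/

open Cardinal Set

/-- The height of a node `t` of a tree: the order type of its set of strict predecessors. -/
noncomputable def treeHt {T : Type} [PartialOrder T]
    (hwo : ∀ t : T, IsWellOrder {s : T // s < t} fun a b => (a : T) < (b : T)) (t : T) :
    Ordinal :=
  @Ordinal.type {s : T // s < t} (fun a b => (a : T) < (b : T)) (hwo t)

/-- `b` is a vanishing branch of length `o` through the tree `T`: a downward closed
chain meeting every level below `o` and having no upper bound at level `o`. -/
def VanishingBranch {T : Type} [PartialOrder T]
    (hwo : ∀ t : T, IsWellOrder {s : T // s < t} fun a b => (a : T) < (b : T))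
    (b : Set T) (o : Ordinal) : Prop :=
  IsChain (· ≤ ·) b ∧ (∀ t ∈ b, treeHt hwo t < o) ∧
    (∀ s t : T, t ∈ b → s ≤ t → s ∈ b) ∧
    (∀ o' : Ordinal, o' < o → ∃ t ∈ b, treeHt hwo t = o') ∧
    ¬ ∃ t : T, treeHt hwo t = o ∧ ∀ s ∈ b, s ≤ t

/-- `b` is a cofinal branch of a tree of height `ω₁`: a maximal (equivalently, downward
closed) chain meeting every countable level. -/
def CofinalBranch {T : Type} [PartialOrder T]
    (hwo : ∀ t : T, IsWellOrder {s : T // s < t} fun a b => (a : T) < (b : T))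
    (b : Set T) : Prop :=
  IsChain (· ≤ ·) b ∧ (∀ s t : T, t ∈ b → s ≤ t → s ∈ b) ∧
    ∀ o : Ordinal, o < (aleph 1).ord → ∃ t ∈ b, treeHt hwo t = o

universe u v

theorem Cardinal.aleph_one_lt_two_power_aleph0_univ
    (h : aleph.{u} 1 < 2 ^ (ℵ₀ : Cardinal.{u})) :
    aleph.{v} 1 < 2 ^ (ℵ₀ : Cardinal.{v}) := by
  rw [two_power_aleph0] at h ⊢
  have h' := lift_lt.{u, v}.2 h
  rw [lift_aleph, lift_continuum, Ordinal.lift_one] at h'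
  rwa [← lift_continuum.{u, v}, ← Ordinal.lift_one.{v, u}, ← lift_aleph.{v, u}, lift_lt] at h'

theorem Cardinal.mk_le_card_of_injective {α : Type u} {o : Ordinal.{u}} {f : α → Ordinal.{u}}
    (hf : Function.Injective f) (hlt : ∀ a, f a < o) : #α ≤ o.card := by
  have := lift_mk_le_lift_mk_of_injective (f := fun a => (⟨f a, hlt a⟩ : Iio o))
    fun a b h => hf (congrArg Subtype.val h)
  rwa [mk_Iio_ordinal, lift_lift, lift_le] at this

theorem IsMaxChain.mem_of_forall_le {α : Type*} [PartialOrder α] {m : Set α}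
    (hm : IsMaxChain (· ≤ ·) m) {t : α} (ht : ∀ s ∈ m, s ≤ t) : t ∈ m :=
  hm.2 (hm.1.insert fun s hs _ => Or.inr (ht s hs)) (subset_insert t m) ▸ mem_insert t m

theorem Cardinal.le_mk_inter_of_mk_diff_lt {α : Type u} {s t : Set α} {κ : Cardinal.{u}}
    (hκ : ℵ₀ ≤ κ) (hs : κ ≤ #s) (hst : #↥(s \ t) < κ) : κ ≤ #↥(s ∩ t) := by
  by_contra! h
  refine hs.not_gt ?_
  calc #s = #↥(s ∩ t ∪ s \ t) := by rw [inter_union_sdiff]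
    _ ≤ #↥(s ∩ t) + #↥(s \ t) := mk_union_le _ _
    _ < κ := add_lt_of_lt hκ h hst

section SplittingOrder

variable {α : Type*}

def splitChain (a : α) (f g : α → α) (x : ℕ → Bool) : ℕ → α
  | 0 => a
  | n + 1 => bif x n then f (splitChain a f g x n) else g (splitChain a f g x n)

theorem splitChain_eq_of_forall_lt_eq {a : α} {f g : α → α} {x y : ℕ → Bool} {n : ℕ}
    (h : ∀ k < n, x k = y k) : splitChain a f g x n = splitChain a f g y n := by
  induction n with
  | zero => rfl
  | succ n ih =>
    simp only [splitChain, ih fun k hk => h k (hk.trans n.lt_succ_self), h n n.lt_succ_self]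

variable [PartialOrder α]

theorem splitChain_strictMono {a : α} {f g : α → α} (hf : ∀ b, b < f b) (hg : ∀ b, b < g b)
    (x : ℕ → Bool) : StrictMono (splitChain a f g x) := by
  refine strictMono_nat_of_lt_succ fun n => ?_
  cases hx : x n <;> simp [splitChain, hx, hf, hg]

theorem not_splitChain_succ_le {a : α} {f g : α → α} (hfg : ∀ b, ¬ f b ≤ g b)
    (hgf : ∀ b, ¬ g b ≤ f b) {x y : ℕ → Bool} {n : ℕ} (h : ∀ k < n, x k = y k)
    (hn : x n ≠ y n) : ¬ splitChain a f g x (n + 1) ≤ splitChain a f g y (n + 1) := by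
  simp only [splitChain, splitChain_eq_of_forall_lt_eq h]
  cases hx : x n <;> cases hy : y n <;> simp_all

theorem two_power_aleph0_le_mk_isMaxChain [Nonempty α]
    (h : ∀ a : α, ∃ b c, a < b ∧ a < c ∧ ¬ b ≤ c ∧ ¬ c ≤ b) :
    2 ^ ℵ₀ ≤ #{m : Set α // IsMaxChain (· ≤ ·) m} := by
  obtain ⟨a⟩ := ‹Nonempty α›
  choose f g hf hg hfg hgf using h
  choose M hM hsub using fun x =>
    (splitChain_strictMono (a := a) hf hg x).monotone.isChain_range.exists_maxChain
  have hinj : Function.Injective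
      fun x => (⟨M x, hM x⟩ : {m : Set α // IsMaxChain (· ≤ ·) m}) := by
    intro x y hxy
    by_contra hne
    set n := PiNat.firstDiff x y
    have hlt : ∀ k < n, x k = y k := fun k => PiNat.apply_eq_of_lt_firstDiff
    have hMxy : M x = M y := congrArg Subtype.val hxy
    have hx : splitChain a f g x (n + 1) ∈ M y := hMxy ▸ hsub x ⟨_, rfl⟩
    have hy : splitChain a f g y (n + 1) ∈ M y := hsub y ⟨_, rfl⟩
    rcases (hM y).1.total hx hy with hle | hle
    · exact not_splitChain_succ_le hfg hgf hlt (PiNat.apply_firstDiff_ne hne) hle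
    · exact not_splitChain_succ_le hfg hgf (fun k hk => (hlt k hk).symm)
        (PiNat.apply_firstDiff_ne hne).symm hle
  simpa using lift_mk_le_lift_mk_of_injective hinj

end SplittingOrder

section Tree

variable {T : Type} [PartialOrder T]

theorem le_or_le_of_lt_of_lt
    (hwo : ∀ t : T, IsWellOrder {s : T // s < t} fun a b => (a : T) < (b : T))
    {r s t : T} (hr : r < t) (hs : s < t) : r ≤ s ∨ s ≤ r := by
  have := hwo t
  rcases trichotomous_of (fun a b : {x : T // x < t} => (a : T) < (b : T)) ⟨r, hr⟩ ⟨s, hs⟩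
    with h | h | h
  · exact Or.inl h.le
  · exact Or.inl (congrArg Subtype.val h).le
  · exact Or.inr h.le

theorem IsMaxChain.mem_of_le
    (hwo : ∀ t : T, IsWellOrder {s : T // s < t} fun a b => (a : T) < (b : T))
    {m : Set T} (hm : IsMaxChain (· ≤ ·) m) {s t : T} (ht : t ∈ m) (hst : s ≤ t) :
    s ∈ m := by
  rcases hst.lt_or_eq with hst | rfl
  · refine hm.2 (hm.1.insert fun r hr _ => ?_) (subset_insert s m) ▸ mem_insert s m
    rcases hm.1.total hr ht with hrt | htr
    · rcases hrt.lt_or_eq with hrt | rfl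
      · exact le_or_le_of_lt_of_lt hwo hst hrt
      · exact Or.inl hst.le
    · exact Or.inl (hst.le.trans htr)
  · exact ht

variable (hwo : ∀ t : T, IsWellOrder {s : T // s < t} fun a b => (a : T) < (b : T))

theorem treeHt_eq_typein {s t : T} (h : s < t) :
    treeHt hwo s =
      @Ordinal.typein {r : T // r < t} (fun a b => (a : T) < (b : T)) (hwo t) ⟨s, h⟩ := by
  have := hwo t
  rw [← Ordinal.type_subrel]
  exact Ordinal.type_eq.2
    ⟨{ toFun := fun a => ⟨⟨a.1, a.2.trans h⟩, a.2⟩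
       invFun := fun b => ⟨b.1.1, b.2⟩
       left_inv := fun _ => rfl
       right_inv := fun _ => rfl
       map_rel_iff' := Iff.rfl }⟩

theorem treeHt_lt_treeHt {s t : T} (h : s < t) : treeHt hwo s < treeHt hwo t := by
  have := hwo t
  rw [treeHt_eq_typein hwo h]
  exact Ordinal.typein_lt_type _ _

theorem exists_lt_treeHt_eq {t : T} {o : Ordinal} (h : o < treeHt hwo t) :
    ∃ s, s < t ∧ treeHt hwo s = o := by
  have := hwo t
  obtain ⟨a, ha⟩ := Ordinal.typein_surj (fun a b : {s : T // s < t} => (a : T) < (b : T)) h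
  exact ⟨a.1, a.2, (treeHt_eq_typein hwo a.2).trans ha⟩

theorem IsMaxChain.treeHt_lt_of_forall_ne {m : Set T} (hm : IsMaxChain (· ≤ ·) m)
    {o : Ordinal} (ho : ∀ t ∈ m, treeHt hwo t ≠ o) : ∀ t ∈ m, treeHt hwo t < o := by
  intro t ht
  by_contra! hle
  rcases hle.lt_or_eq with hlt | heq
  · obtain ⟨s, hst, hs⟩ := exists_lt_treeHt_eq hwo hlt
    exact ho s (hm.mem_of_le hwo ht hst.le) hs
  · exact ho t ht heq.symm

theorem IsMaxChain.exists_mem_treeHt_eq_add_one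
    (hsucc : ∀ t : T, ∃ s, t < s ∧ treeHt hwo s = treeHt hwo t + 1)
    {m : Set T} (hm : IsMaxChain (· ≤ ·) m) {t : T} (ht : t ∈ m) :
    ∃ s ∈ m, treeHt hwo s = treeHt hwo t + 1 := by
  by_contra! hmiss
  have hle : ∀ r ∈ m, r ≤ t := by
    intro r hr
    rcases hm.1.total hr ht with hrt | htr
    · exact hrt
    rcases htr.lt_or_eq with htr | rfl
    · have : treeHt hwo r < treeHt hwo t + 1 := hm.treeHt_lt_of_forall_ne hwo hmiss r hr
      exact ((treeHt_lt_treeHt hwo htr).not_ge (Order.lt_add_one_iff.1 this)).elim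
    · exact le_rfl
  obtain ⟨s, hts, hs⟩ := hsucc t
  exact hmiss s (hm.mem_of_forall_le fun r hr => (hle r hr).trans hts.le) hs

/-- A nonempty maximal chain that misses some countable level stops at the least such level,
which must then be a limit, since a chain ending in a node can always be extended. -/
theorem IsMaxChain.cofinalBranch_or_vanishingBranch
    (hsucc : ∀ t : T, ∃ s, t < s ∧ treeHt hwo s = treeHt hwo t + 1)
    {m : Set T} (hm : IsMaxChain (· ≤ ·) m) (hne : m.Nonempty) :
    CofinalBranch hwo m ∨
      ∃ o, Order.IsSuccLimit o ∧ o < (aleph 1).ord ∧ VanishingBranch hwo m o := by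
  have hdown : ∀ s t, t ∈ m → s ≤ t → s ∈ m := fun s t ht hst => hm.mem_of_le hwo ht hst
  by_cases hcof : ∀ o < (aleph 1).ord, ∃ t ∈ m, treeHt hwo t = o
  · exact .inl ⟨hm.1, hdown, hcof⟩
  push Not at hcof
  obtain ⟨o, ⟨hoω, hmiss⟩, hmin⟩ := Ordinal.lt_wf.has_min _ hcof
  have hhit : ∀ o' < o, ∃ t ∈ m, treeHt hwo t = o' := by
    intro o' ho'
    by_contra! h
    exact hmin o' ⟨ho'.trans hoω, h⟩ ho'
  have hlt := hm.treeHt_lt_of_forall_ne hwo hmiss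
  have hlim : Order.IsSuccLimit o := by
    rcases Ordinal.zero_or_succ_or_isSuccLimit o with rfl | ⟨a, rfl⟩ | h
    · obtain ⟨t, ht⟩ := hne
      exact (not_lt_zero (hlt t ht)).elim
    · obtain ⟨t, ht, rfl⟩ := hhit _ (Order.lt_succ _)
      obtain ⟨s, hs, hst⟩ := hm.exists_mem_treeHt_eq_add_one hwo hsucc ht
      exact (hmiss s hs (hst.trans (Order.succ_eq_add_one _).symm)).elim
    · exact h
  refine .inr ⟨o, hlim, hoω, hm.1, hlt, hdown, hhit, ?_⟩
  rintro ⟨t, rfl, hub⟩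
  exact hmiss t (hm.mem_of_forall_le hub) rfl

theorem mk_isMaxChain_not_cofinalBranch_le [Nonempty T]
    (hsucc : ∀ t : T, ∃ s, t < s ∧ treeHt hwo s = treeHt hwo t + 1)
    (hfull : ∀ o : Ordinal, Order.IsSuccLimit o → o < (aleph 1).ord →
      ∀ b b' : Set T, VanishingBranch hwo b o → VanishingBranch hwo b' o → b = b') :
    #{m : Set T // IsMaxChain (· ≤ ·) m ∧ ¬ CofinalBranch hwo m} ≤ aleph 1 := by
  have hvan : ∀ m : {m : Set T // IsMaxChain (· ≤ ·) m ∧ ¬ CofinalBranch hwo m},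
      ∃ o, Order.IsSuccLimit o ∧ o < (aleph 1).ord ∧ VanishingBranch hwo m o := fun m =>
    (m.2.1.cofinalBranch_or_vanishingBranch hwo hsucc (m.2.1.nonempty_iff.1 ‹_›)).resolve_left
      m.2.2
  choose len hlim hlt hlen using hvan
  have hinj : Function.Injective len := fun m m' h =>
    Subtype.ext (hfull _ (hlim m) (hlt m) _ _ (hlen m) (h ▸ hlen m'))
  simpa using mk_le_card_of_injective hinj hlt

end Tree

theorem statement15_general (hCH : aleph 1 < 2 ^ (ℵ₀ : Cardinal))
    (T : Type) [PartialOrder T]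
    (hwo : ∀ t : T, IsWellOrder {s : T // s < t} fun a b => (a : T) < (b : T))
    (hlev : ∀ o : Ordinal, o < (aleph 1).ord → ∃ t : T, treeHt hwo t = o)
    -- `T` is splitting: every node has two incomparable immediate successors
    (hsplit : ∀ t : T, ∃ s₁ s₂ : T, t < s₁ ∧ t < s₂ ∧
      treeHt hwo s₁ = treeHt hwo t + 1 ∧ treeHt hwo s₂ = treeHt hwo t + 1 ∧
      ¬ s₁ ≤ s₂ ∧ ¬ s₂ ≤ s₁)
    -- `T` is full: at most one vanishing branch at every countable limit level
    (hfull : ∀ o : Ordinal, Order.IsSuccLimit o → o < (aleph 1).ord →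
      ∀ b b' : Set T, VanishingBranch hwo b o → VanishingBranch hwo b' o → b = b') :
    2 ^ (ℵ₀ : Cardinal) ≤ #{b : Set T // CofinalBranch hwo b} ∧
      aleph 1 < #{b : Set T // CofinalBranch hwo b} := by
  have hCH₀ : aleph 1 < (2 : Cardinal.{0}) ^ ℵ₀ := aleph_one_lt_two_power_aleph0_univ hCH
  have : Nonempty T := (hlev 0 (ord_pos.2 (aleph_pos 1))).nonempty
  have hsucc : ∀ t : T, ∃ s, t < s ∧ treeHt hwo s = treeHt hwo t + 1 := fun t =>
    let ⟨s, _, hts, _, hs, _⟩ := hsplit t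
    ⟨s, hts, hs⟩
  have hmaxChains := two_power_aleph0_le_mk_isMaxChain fun t =>
    let ⟨s₁, s₂, h₁, h₂, _, _, h₁₂, h₂₁⟩ := hsplit t
    ⟨s₁, s₂, h₁, h₂, h₁₂, h₂₁⟩
  have hvanishing := mk_isMaxChain_not_cofinalBranch_le hwo hsucc hfull
  have hbranches : 2 ^ ℵ₀ ≤ #{b : Set T // CofinalBranch hwo b} :=
    (le_mk_inter_of_mk_diff_lt (cantor ℵ₀).le hmaxChains (hvanishing.trans_lt hCH₀)).trans
      (mk_le_mk_of_subset inter_subset_right)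
  exact ⟨hbranches, hCH₀.trans_le hbranches⟩

/-- Assume `¬CH`, i.e. `ℵ₁ < 2^{ℵ₀}`.  Then every full, splitting,
normal tree of height `ω₁` has at least `2^{ℵ₀}`-many cofinal branches; in particular it
has more than `ω₁`-many cofinal branches. -/
theorem statement15 (hCH : aleph 1 < 2 ^ (ℵ₀ : Cardinal))
    (T : Type) [PartialOrder T]
    (hwo : ∀ t : T, IsWellOrder {s : T // s < t} fun a b => (a : T) < (b : T))
    -- `T` has height `ω₁`
    (hht : ∀ t : T, treeHt hwo t < (aleph 1).ord)
    (hlev : ∀ o : Ordinal, o < (aleph 1).ord → ∃ t : T, treeHt hwo t = o)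
    -- `T` is normal
    (hext : ∀ s : T, ∀ β : Ordinal, treeHt hwo s < β → β < (aleph 1).ord →
      ∃ t : T, treeHt hwo t = β ∧ s < t)
    (hlim : ∀ s t : T, treeHt hwo s = treeHt hwo t → Order.IsSuccLimit (treeHt hwo s) →
      (∀ r : T, r < s ↔ r < t) → s = t)
    -- `T` is splitting: every node has two incomparable immediate successors
    (hsplit : ∀ t : T, ∃ s₁ s₂ : T, t < s₁ ∧ t < s₂ ∧
      treeHt hwo s₁ = treeHt hwo t + 1 ∧ treeHt hwo s₂ = treeHt hwo t + 1 ∧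
      ¬ s₁ ≤ s₂ ∧ ¬ s₂ ≤ s₁)
    -- `T` is full: at most one vanishing branch at every countable limit level
    (hfull : ∀ o : Ordinal, Order.IsSuccLimit o → o < (aleph 1).ord →
      ∀ b b' : Set T, VanishingBranch hwo b o → VanishingBranch hwo b' o → b = b') :
    2 ^ (ℵ₀ : Cardinal) ≤ #{b : Set T // CofinalBranch hwo b} ∧
      aleph 1 < #{b : Set T // CofinalBranch hwo b} :=
  statement15_general hCH T hwo hlev hsplit hfull
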